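/- arXiv:cs/0502033 — 3 statements merged into one kernel-verified Lean document; each statement's English description precedes it below -/
import Mathlib

section
/- The minimum Hamming distance of the cycle code of a graph N equals the girth of N (the length of a shortest cycle in N), provided N contains at least one cycle. -/
/-!
The edge indicator of a shortest cycle is a codeword whose weight is the girth. Conversely, the
support of a nonzero codeword spans a subgraph with an edge in which every degree is even; a
longest path in it cannot start at a leaf, so the subgraph has a cycle, and that cycle has at
most as many edges as the codeword has nonzero entries.
-/

open Finset

theorem ZMod.sum_eq_card_filter_ne_zero {ι : Type*} (s : Finset ι) (f : ι → ZMod 2) :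
    ∑ i ∈ s, f i = #{i ∈ s | f i ≠ 0} := by
  have hf : ∀ i, f i = if f i ≠ 0 then 1 else 0 := fun i => by
    generalize f i = a; fin_cases a <;> rfl
  rw [sum_congr rfl fun i _ => hf i, sum_boole]

namespace SimpleGraph

variable {V : Type*}

theorem not_isAcyclic_of_degree_ne_one {H : SimpleGraph V} [H.LocallyFinite] [Finite H.edgeSet]
    {a b : V} (hab : H.Adj a b) (hdeg : ∀ v, H.degree v ≠ 1) : ¬ H.IsAcyclic := by
  intro hacyc
  have : Nonempty V := ⟨a⟩
  obtain ⟨u, v, p, hp, hlongest⟩ := Walk.exists_isPath_forall_isPath_length_le_length H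
  have hp_ne_nil : ¬ p.Nil := by
    have := hlongest _ _ _ (Path.singleton hab).property
    rw [Walk.not_nil_iff_lt_length]
    exact (by simpa using this : 1 ≤ p.length)
  -- a longest path cannot be extended at `u`, so every neighbour of `u` lies on it
  have hnbr : ∀ w, H.Adj u w → w = p.snd := fun w huw =>
    hacyc.eq_snd_of_adj_start hp huw <| by
      by_contra hw
      have := hlongest _ _ _ (hp.cons hw : (p.cons huw.symm).IsPath)
      simp at this
  exact hdeg u (degree_eq_one_iff_existsUnique_adj.2 ⟨p.snd, p.adj_snd hp_ne_nil, hnbr⟩)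

variable [Fintype V] [DecidableEq V] {G : SimpleGraph V}

def Walk.edgeIndicator {u v : V} (p : G.Walk u v) : Sym2 V → ZMod 2 :=
  fun e => if e ∈ p.edges then 1 else 0

theorem Walk.IsTrail.hammingNorm_edgeIndicator {u v : V} {p : G.Walk u v} (hp : p.IsTrail) :
    hammingNorm p.edgeIndicator = p.length := by
  have : ({e | p.edgeIndicator e ≠ 0} : Finset (Sym2 V)) = p.edges.toFinset := by
    ext e
    by_cases he : e ∈ p.edges <;> simp [edgeIndicator, he]
  rw [hammingNorm, this, List.toFinset_card_of_nodup hp.edges_nodup, p.length_edges]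

variable (G) [DecidableRel G.Adj]

def IsCycleCodeword (x : Sym2 V → ZMod 2) : Prop :=
  (∀ e, x e ≠ 0 → e ∈ G.edgeSet) ∧ ∀ v, ∑ e ∈ G.incidenceFinset v, x e = 0

variable {G}

theorem IsCycleCodeword.even_degree_fromEdgeSet {x : Sym2 V → ZMod 2} (hx : G.IsCycleCodeword x)
    [DecidableRel (fromEdgeSet (Function.support x)).Adj] (v : V) :
    Even ((fromEdgeSet (Function.support x)).degree v) := by
  rw [← card_incidenceFinset_eq_degree, ← ZMod.natCast_eq_zero_iff_even, ← hx.2 v,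
    ZMod.sum_eq_card_filter_ne_zero]
  congr 2
  ext e
  simp only [mem_incidenceFinset, incidenceSet, edgeSet_fromEdgeSet, mem_filter, Set.mem_ofPred_eq,
    Set.mem_sdiff, Function.mem_support]
  constructor
  · rintro ⟨⟨hxe, -⟩, hv⟩
    exact ⟨⟨hx.1 e hxe, hv⟩, hxe⟩
  · rintro ⟨⟨hG, hv⟩, hxe⟩
    exact ⟨⟨hxe, G.not_isDiag_of_mem_edgeSet hG⟩, hv⟩

theorem IsCycleCodeword.egirth_le_hammingNorm {x : Sym2 V → ZMod 2} (hx : G.IsCycleCodeword x)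
    (hx0 : x ≠ 0) : G.egirth ≤ hammingNorm x := by
  classical
  set H := fromEdgeSet (Function.support x)
  have hHG : H ≤ G := fun a b hab => hx.1 _ hab.1
  obtain ⟨e, he⟩ := Function.ne_iff.1 hx0
  induction e using Sym2.ind with | _ a b => ?_
  have hab : H.Adj a b := ⟨he, (G.mem_edgeSet.1 (hx.1 _ he)).ne⟩
  have hdeg : ∀ v, H.degree v ≠ 1 := fun v h1 =>
    Nat.not_even_one (h1 ▸ hx.even_degree_fromEdgeSet v)
  obtain ⟨u, c, hc, hlen⟩ := exists_egirth_eq_length.2 (not_isAcyclic_of_degree_ne_one hab hdeg)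
  have hsupp : H.edgeFinset ⊆ ({e | x e ≠ 0} : Finset (Sym2 V)) := fun e he => by
    have := mem_edgeFinset.1 he
    rw [edgeSet_fromEdgeSet] at this
    simpa using this.1
  calc G.egirth ≤ H.egirth := egirth_anti hHG
    _ = c.length := hlen
    _ ≤ #H.edgeFinset := by exact_mod_cast hc.isTrail.length_le_card_edgeFinset
    _ ≤ hammingNorm x := by exact_mod_cast card_le_card hsupp

theorem Walk.IsTrail.isCycleCodeword_edgeIndicator {u : V} {p : G.Walk u u} (hp : p.IsTrail) :
    G.IsCycleCodeword p.edgeIndicator := by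
  refine ⟨fun e he => p.edges_subset_edgeSet ?_, fun v => ?_⟩
  · by_contra hmem
    simp [edgeIndicator, hmem] at he
  · have hinc : ({e ∈ G.incidenceFinset v | p.edgeIndicator e ≠ 0} : Finset (Sym2 V)) =
        (p.edges.filter (v ∈ ·)).toFinset := by
      ext e
      by_cases he : e ∈ p.edges
      · simp [edgeIndicator, he, mem_incidenceFinset, incidenceSet, p.edges_subset_edgeSet he]
      · simp [edgeIndicator, he]
    rw [ZMod.sum_eq_card_filter_ne_zero, hinc, List.toFinset_card_of_nodup
      (hp.edges_nodup.filter _), ← List.countP_eq_length_filter, ZMod.natCast_eq_zero_iff_even,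
      hp.even_countP_edges_iff]
    exact fun h => absurd rfl h

end SimpleGraph

/-- The minimum Hamming distance of the cycle code of a graph `N`
equals the girth of `N`, provided `N` contains at least one cycle.

Codewords of the cycle code are the binary vectors indexed by `Sym2 V`,
supported on the edges of `N`, meeting every vertex in an even number of
support edges (sum of incident values is `0` in `GF(2)`).  The Hamming weight
is the size of the support; the set of weights of nonzero codewords is compared
(in `ℕ∞`) with `G.girth`. -/
theorem minDistance_cycleCode_eq_girth {V : Type*} [Fintype V] [DecidableEq V]
    (G : SimpleGraph V) [DecidableRel G.Adj] (h : ¬ G.IsAcyclic) :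
    sInf {w : ℕ∞ | ∃ x : Sym2 V → ZMod 2,
        (∀ e, x e ≠ 0 → e ∈ G.edgeSet) ∧
        (∀ v, ∑ e ∈ G.incidenceFinset v, x e = 0) ∧
        x ≠ 0 ∧
        w = ((Finset.univ.filter (fun e => x e ≠ 0)).card : ℕ∞)}
      = G.girth := by
  rw [SimpleGraph.girth, ENat.natCast_toNat (SimpleGraph.egirth_eq_top.not.2 h)]
  refine le_antisymm ?_ (le_sInf ?_)
  · obtain ⟨a, c, hc, hlen⟩ := SimpleGraph.exists_egirth_eq_length.2 h
    have hweight := hc.isTrail.hammingNorm_edgeIndicator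
    have hcode := hc.isTrail.isCycleCodeword_edgeIndicator
    refine sInf_le ⟨c.edgeIndicator, hcode.1, hcode.2, ?_, ?_⟩
    · rw [← hammingNorm_ne_zero_iff, hweight]
      have := hc.three_le_length
      omega
    · rw [hlen, ← hweight]
      rfl
  · rintro _ ⟨x, hsupp, hsum, hx0, rfl⟩
    exact SimpleGraph.IsCycleCodeword.egirth_le_hammingNorm ⟨hsupp, hsum⟩ hx0
end

section
/- Let π: Ỹ → X be a finite unramified cover of graphs. The image under π of any simple cycle on Ỹ is a backtrackless, tailless cycle on X. -/
/-!
A cover is injective on every neighbourhood, so two edges `s(a, b)`, `s(b, c)` through a common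
vertex have the same image only if `a = c`; hence covers map backtrackless walks to backtrackless
walks. A simple cycle followed once more by its first edge is backtrackless, and backtracklessness
of its image says exactly that the image of the cycle is backtrackless and tailless.
-/

open SimpleGraph

namespace SimpleGraph

variable {V W : Type*} {G : SimpleGraph V} {H : SimpleGraph W} {f : G →g H}

theorem Hom.eq_of_map_edge_eq (hf : ∀ v, Set.InjOn f (G.neighborSet v)) {a b c : V}
    (hba : G.Adj b a) (hbc : G.Adj b c) (h : Sym2.map f s(a, b) = Sym2.map f s(b, c)) :
    a = c := by
  rw [Sym2.map_mk, Sym2.map_mk, Sym2.eq_iff] at h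
  rcases h with ⟨hab, -⟩ | ⟨hac, -⟩
  · exact absurd (hab ▸ f.map_adj hba) H.irrefl
  · exact hf b hba hbc hac

theorem Walk.isChain_ne_edges_map (hf : ∀ v, Set.InjOn f (G.neighborSet v)) {u v : V}
    {p : G.Walk u v} (hp : p.edges.IsChain (· ≠ ·)) : (p.map f).edges.IsChain (· ≠ ·) := by
  induction p with
  | nil => simp
  | cons hab p ih =>
    cases p with
    | nil => simp
    | cons hbc q =>
      rw [edges_cons, edges_cons, List.isChain_cons_cons] at hp
      rw [map_cons, edges_cons, map_cons, edges_cons, List.isChain_cons_cons]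
      refine ⟨fun he => hp.1 ?_, ih hp.2⟩
      rw [Hom.eq_of_map_edge_eq hf hab.symm hbc he, Sym2.eq_swap]

theorem Walk.IsCycle.isChain_ne_edges_concat {u v : V} {h : G.Adj u v} {p : G.Walk v u}
    (hc : (cons h p).IsCycle) : ((cons h p).concat h).edges.IsChain (· ≠ ·) := by
  rw [edges_concat, List.concat_eq_append, List.isChain_append]
  refine ⟨hc.edges_nodup.isChain, List.isChain_singleton _, fun e he e' he' => ?_⟩
  have hp : p.edges ≠ [] := by simpa using not_nil_of_isCycle_cons hc
  rw [edges_cons, List.getLast?_cons, List.getLast?_eq_some_getLast hp] at he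
  simp only [Option.getD_some, Option.mem_def, Option.some.injEq, List.head?_cons] at he he'
  subst he he'
  exact fun heq => ((cons_isCycle_iff p h).mp hc).2 (heq ▸ List.getLast_mem hp)

end SimpleGraph

theorem image_of_simple_cycle_is_backtrackless_tailless_general
    {VY VX : Type*}
    (Y : SimpleGraph VY) (X : SimpleGraph VX)
    (π : Y →g X)
    (hcover : ∀ y : VY, Set.BijOn π (Y.neighborSet y) (X.neighborSet (π y)))
    (v : VY) (w : Y.Walk v v) (hw : w.IsCycle) :
    (w.map π).edges.Chain' (· ≠ ·) ∧
    ∀ (h h' : (w.map π).edges ≠ []),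
      (w.map π).edges.head h ≠ (w.map π).edges.getLast h' := by
  obtain ⟨b, hvb, p, rfl⟩ := Walk.not_nil_iff.mp hw.not_nil
  have hclosed := Walk.isChain_ne_edges_map (fun y => (hcover y).injOn) hw.isChain_ne_edges_concat
  rw [Walk.edges_map, Walk.edges_concat, List.concat_eq_append, List.map_append,
    ← Walk.edges_map, List.isChain_append] at hclosed
  refine ⟨hclosed.1, fun h₁ h₂ => ?_⟩
  have hlast := hclosed.2.2 _ (List.getLast?_eq_some_getLast h₂) _ rfl
  simpa using hlast.symm

/-- Let `π : Y → X` be a finite unramified cover of graphs.  The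
image under `π` of any simple cycle on `Y` is a backtrackless, tailless cycle
on `X`.

A cover is a surjective graph homomorphism mapping the neighborhood of each
vertex bijectively onto the neighborhood of its image.  A simple cycle on `Y`
is a closed walk that is a cycle in the usual sense (`Walk.IsCycle`).
Backtrackless: no two consecutive edges of the image walk are equal; tailless:
the first and last edges of the image walk are distinct. -/
theorem image_of_simple_cycle_is_backtrackless_tailless
    {VY VX : Type*} [Fintype VY] [Fintype VX]
    (Y : SimpleGraph VY) (X : SimpleGraph VX)
    (π : Y →g X)
    (hsurj : Function.Surjective π)
    (hcover : ∀ y : VY, Set.BijOn π (Y.neighborSet y) (X.neighborSet (π y)))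
    (v : VY) (w : Y.Walk v v) (hw : w.IsCycle) :
    (w.map π).edges.Chain' (· ≠ ·) ∧
    ∀ (h h' : (w.map π).edges ≠ []),
      (w.map π).edges.head h ≠ (w.map π).edges.getLast h' :=
  image_of_simple_cycle_is_backtrackless_tailless_general Y X π hcover v w hw
end

section
/- If c̃ is a codeword of the code C̃ defined by an M-fold cover T̃ of the Tanner graph T(H), then the pseudo-codeword ω(c̃), with ω_i(c̃) = (1/M)·Σ_{m=1}^M c̃_{i,m} (sum over ℝ), lies in the fundamental cone K(H). -/
lemma val_le_sum_erase {ι : Type*} [DecidableEq ι] (s : Finset ι) (f : ι → ZMod 2)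
    (h : ∑ x ∈ s, f x = 0) {a : ι} (ha : a ∈ s) :
    ((f a).val : ℝ) ≤ ∑ x ∈ s.erase a, ((f x).val : ℝ) := by
  have hsum : f a + ∑ x ∈ s.erase a, f x = 0 := by
    rw [Finset.add_sum_erase s f ha]; exact h
  have hfa : f a = 0 ∨ f a = 1 := by
    generalize f a = x; revert x; decide
  rcases hfa with h0 | h1
  · rw [h0]
    simp only [ZMod.val_zero, Nat.cast_zero]
    exact Finset.sum_nonneg fun x _ => by positivity
  · rw [h1]
    have hrest : ∑ x ∈ s.erase a, f x = 1 := by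
      rw [h1] at hsum
      rw [← neg_eq_of_add_eq_zero_right hsum]; decide
    have hne : ∑ x ∈ s.erase a, f x ≠ 0 := by rw [hrest]; decide
    obtain ⟨b, hb, hb1⟩ := Finset.exists_ne_zero_of_sum_ne_zero hne
    calc ((1 : ZMod 2).val : ℝ) = 1 := by rw [ZMod.val_one]; norm_num
    _ ≤ ((f b).val : ℝ) := by
        have : 1 ≤ (f b).val := Nat.one_le_iff_ne_zero.mpr
          (fun h => hb1 ((ZMod.val_eq_zero (f b)).mp h))
        exact_mod_cast this
    _ ≤ ∑ x ∈ s.erase a, ((f x).val : ℝ) :=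
        Finset.single_le_sum (f := fun x => ((f x).val : ℝ)) (fun x _ => by positivity) hb


open Finset

/-- The fundamental cone `K(H)` of a binary parity-check matrix `H`. -/
def fundamentalCone {m n : ℕ} (H : Matrix (Fin m) (Fin n) (ZMod 2)) :
    Set (Fin n → ℝ) :=
  {ω | (∀ i, 0 ≤ ω i) ∧
    ∀ j i, H j i = 1 →
      ω i ≤ ∑ i' ∈ (Finset.univ.filter (fun i' => H j i' = 1)).erase i, ω i'}

/-- If `c̃` is a codeword of the code `C̃` defined by an `M`-fold
cover `T̃` of the Tanner graph `T(H)`, then the pseudo-codeword `ω(c̃)`, with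
`ω_i(c̃) = (1/M) Σ_{k=1}^M c̃_{i,k}` (sum over `ℝ`), lies in the fundamental
cone `K(H)`.

The `M`-cover is specified by permutations `π j i` of `{1,…,M}` for each row
`j` and each `i ∈ I_j = {i : H j i = 1}`; membership in the covering code means
`Σ_{i ∈ I_j} c̃ i (π j i k) = 0` in `GF(2)` for all `j` and all `k`. -/
theorem pseudo_codeword_of_cover_codeword_mem_fundamentalCone
    {m n M : ℕ} (hM : 0 < M)
    (H : Matrix (Fin m) (Fin n) (ZMod 2))
    (π : Fin m → Fin n → Equiv.Perm (Fin M))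
    (c : Fin n → Fin M → ZMod 2)
    (hc : ∀ (j : Fin m) (k : Fin M),
      ∑ i ∈ Finset.univ.filter (fun i => H j i = 1), c i (π j i k) = 0) :
    (fun i => (1 / (M : ℝ)) * ∑ k, ((c i k).val : ℝ)) ∈ fundamentalCone H := by
  constructor
  · intro i
    have : (0:ℝ) ≤ ∑ k, ((c i k).val : ℝ) := Finset.sum_nonneg fun k _ => by positivity
    positivity
  · intro j i hij
    simp only
    rw [← Finset.mul_sum]
    have hMpos : (0:ℝ) < 1 / (M:ℝ) := by positivity
    refine mul_le_mul_of_nonneg_left ?_ hMpos.le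
    have hperm : ∀ i' : Fin n, ∑ k, ((c i' k).val : ℝ)
        = ∑ k, ((c i' ((π j i') k)).val : ℝ) :=
      fun i' => (Equiv.sum_comp (π j i') fun k => ((c i' k).val : ℝ)).symm
    rw [hperm i]
    calc ∑ k, ((c i ((π j i) k)).val : ℝ)
        ≤ ∑ k, ∑ i' ∈ (Finset.univ.filter (fun i' => H j i' = 1)).erase i,
            ((c i' ((π j i') k)).val : ℝ) := by
          refine Finset.sum_le_sum fun k _ => ?_
          exact val_le_sum_erase _ (fun i' => c i' ((π j i') k)) (hc j k)
            (Finset.mem_filter.mpr ⟨Finset.mem_univ i, hij⟩)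
      _ = ∑ i' ∈ (Finset.univ.filter (fun i' => H j i' = 1)).erase i,
            ∑ k, ((c i' ((π j i') k)).val : ℝ) := Finset.sum_comm
      _ = _ := by
          refine Finset.sum_congr rfl fun i' _ => ?_
          exact (hperm i').symm
end
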